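/- Let q(x) = ½xᵀQx + cᵀx + α with Q ∈ ℝⁿˣⁿ symmetric, and let P = {x ∈ ℝⁿ : Ax ≥ b} be a polyhedron. For x̄ ∈ P the following are equivalent: (a1) x̄ is a stationary point of q on P and Q is strictly copositive on the critical cone C(x̄;q;P); (a2) x̄ is a stationary point of q on P, Q is copositive on C(x̄;q;P), and the only v with C(x̄;q;P) ∋ v ⟂ Qv ∈ C(x̄;q;P)* is v = 0 (where C* is the dual cone and ⟂ means vᵀQv = 0); (a3) x̄ is both a local minimizer of q on P and an isolated stationary point; (a4) x̄ is an isolated local minimizer of q on P; (a5) x̄ is a strict local minimizer of q on P; (a6) x̄ is a strong local minimizer of q on P. -/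

import Mathlib

open Filter Topology Set

noncomputable section

/-- Euclidean norm on `Fin n → ℝ`. -/
def n2 {n : ℕ} (v : Fin n → ℝ) : ℝ := Real.sqrt (∑ i, v i ^ 2)

/-- The tangent cone of `S` at `x`. -/
def TangentCone {n : ℕ} (S : Set (Fin n → ℝ)) (x : Fin n → ℝ) : Set (Fin n → ℝ) :=
  {v | ∃ (xs : ℕ → Fin n → ℝ) (τ : ℕ → ℝ),
    (∀ k, xs k ∈ S) ∧ Tendsto xs atTop (𝓝 x) ∧
    (∀ k, 0 < τ k) ∧ Tendsto τ atTop (𝓝 (0:ℝ)) ∧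
    Tendsto (fun k => (τ k)⁻¹ • (xs k - x)) atTop (𝓝 v)}

/-- Local minimizer of `f` on `X`. -/
def IsLocMin' {n : ℕ} (f : (Fin n → ℝ) → ℝ) (X : Set (Fin n → ℝ)) (xbar : Fin n → ℝ) : Prop :=
  xbar ∈ X ∧ ∃ ε > (0:ℝ), ∀ y ∈ X, n2 (y - xbar) < ε → f xbar ≤ f y

/-- Strict local minimizer of `f` on `X`. -/
def IsStrictLocMin {n : ℕ} (f : (Fin n → ℝ) → ℝ) (X : Set (Fin n → ℝ)) (xbar : Fin n → ℝ) : Prop :=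
  xbar ∈ X ∧ ∃ ε > (0:ℝ), ∀ y ∈ X, n2 (y - xbar) < ε → y ≠ xbar → f xbar < f y

/-- Strong local minimizer of `f` on `X`. -/
def IsStrongLocMin {n : ℕ} (f : (Fin n → ℝ) → ℝ) (X : Set (Fin n → ℝ)) (xbar : Fin n → ℝ) : Prop :=
  xbar ∈ X ∧ ∃ c > (0:ℝ), ∃ ε > (0:ℝ), ∀ y ∈ X, n2 (y - xbar) < ε →
    f xbar + c * n2 (y - xbar) ^ 2 ≤ f y

/-- Isolated local minimizer of `f` on `X`: the only local minimizer in a neighborhood. -/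
def IsIsolatedLocMin {n : ℕ} (f : (Fin n → ℝ) → ℝ) (X : Set (Fin n → ℝ)) (xbar : Fin n → ℝ) : Prop :=
  IsLocMin' f X xbar ∧ ∃ ε > (0:ℝ), ∀ y, IsLocMin' f X y → n2 (y - xbar) < ε → y = xbar

/-- The quadratic function `q(x) = ½ xᵀQx + cᵀx + α`. -/
def quadF {n : ℕ} (Q : Matrix (Fin n) (Fin n) ℝ) (c : Fin n → ℝ) (α : ℝ)
    (x : Fin n → ℝ) : ℝ :=
  (1/2) * (∑ i, ∑ j, Q i j * x i * x j) + (∑ i, c i * x i) + α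

/-- The gradient `∇q(x) = Qx + c` (for symmetric `Q`). -/
def gradQ {n : ℕ} (Q : Matrix (Fin n) (Fin n) ℝ) (c : Fin n → ℝ) (x : Fin n → ℝ) :
    Fin n → ℝ :=
  fun i => (∑ j, Q i j * x j) + c i

/-- Stationary point of the QP `min_{x∈P} q(x)`: `∇q(y)ᵀ(x − y) ≥ 0` for all `x ∈ P`. -/
def IsStatQ {n : ℕ} (Q : Matrix (Fin n) (Fin n) ℝ) (c : Fin n → ℝ)
    (P : Set (Fin n → ℝ)) (y : Fin n → ℝ) : Prop :=
  y ∈ P ∧ ∀ x ∈ P, 0 ≤ ∑ i, gradQ Q c y i * (x i - y i)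

/-! The objective is exactly quadratic, `q (x + d) = q x + ∇q(x) ⬝ d + ½ dᵀQd`, so along feasible
rays the first- and second-order conditions are exact: this gives (a5) ⇒ (a1) and stationarity of
local minimizers, while (a1) ⇔ (a2) is the first-order condition for minimizing `vᵀQv` over the
convex cone `C` at a zero of the form. The converse directions (a1) ⇒ (a6) and
(a2) ⇒ "isolated stationary point" go by contradiction: normalizing a sequence of bad points
`y k → x̄` and extracting a convergent subsequence yields a unit direction `w ∈ C` with
`wᵀQw ≤ 0`; for stationary `y k` also `Qw ∈ C*`, because near `x̄` the tangent cone of a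
polyhedron can only grow. -/

open Matrix

section Development

variable {n m : ℕ}

section EuclideanNorm

lemma n2_eq_norm (v : Fin n → ℝ) : n2 v = ‖(EuclideanSpace.equiv (Fin n) ℝ).symm v‖ := by
  simp [n2, EuclideanSpace.norm_eq]

lemma continuous_n2 : Continuous (n2 : (Fin n → ℝ) → ℝ) := by
  simp only [funext n2_eq_norm]
  fun_prop

lemma n2_nonneg (v : Fin n → ℝ) : 0 ≤ n2 v := Real.sqrt_nonneg _

lemma n2_zero : n2 (0 : Fin n → ℝ) = 0 := by simp [n2_eq_norm]

lemma n2_pos {v : Fin n → ℝ} (hv : v ≠ 0) : 0 < n2 v := by simpa [n2_eq_norm] using hv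

lemma n2_smul (t : ℝ) (v : Fin n → ℝ) : n2 (t • v) = |t| * n2 v := by
  simp [n2_eq_norm, norm_smul]

lemma n2_sub_le_n2_sub_add_n2_sub (x y z : Fin n → ℝ) : n2 (x - z) ≤ n2 (x - y) + n2 (y - z) := by
  simpa [n2_eq_norm] using norm_sub_le_norm_sub_add_norm_sub _ _ _

lemma isCompact_n2_eq_one : IsCompact {v : Fin n → ℝ | n2 v = 1} := by
  have h := (isCompact_sphere (0 : EuclideanSpace ℝ (Fin n)) 1).image
    (EuclideanSpace.equiv (Fin n) ℝ).continuous
  convert h using 1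
  ext v
  simp [n2_eq_norm, ContinuousLinearEquiv.image_eq_preimage_symm]

lemma tendsto_of_n2_sub_lt {x : Fin n → ℝ} {y : ℕ → Fin n → ℝ}
    (h : ∀ k, n2 (y k - x) < 1 / ((k : ℝ) + 1)) : Tendsto y atTop (𝓝 x) := by
  have h' : Tendsto (fun k => (EuclideanSpace.equiv (Fin n) ℝ).symm (y k)) atTop
      (𝓝 ((EuclideanSpace.equiv (Fin n) ℝ).symm x)) := by
    refine tendsto_iff_norm_sub_tendsto_zero.2 <| squeeze_zero (fun _ => norm_nonneg _)
      (fun k => ?_) tendsto_one_div_add_atTop_nhds_zero_nat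
    simpa [n2_eq_norm] using (h k).le
  simpa only [Function.comp_def, ContinuousLinearEquiv.apply_symm_apply] using
    ((EuclideanSpace.equiv (Fin n) ℝ).continuous.tendsto _).comp h'

end EuclideanNorm

section Quadratic

variable {Q : Matrix (Fin n) (Fin n) ℝ} {c : Fin n → ℝ} {α : ℝ}

lemma sum_sum_mul_eq_dotProduct_mulVec (Q : Matrix (Fin n) (Fin n) ℝ) (v : Fin n → ℝ) :
    ∑ i, ∑ j, Q i j * v i * v j = v ⬝ᵥ Q *ᵥ v := by
  simp only [dotProduct, mulVec, Finset.mul_sum]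
  exact Finset.sum_congr rfl fun i _ => Finset.sum_congr rfl fun j _ => by ring

lemma gradQ_eq (Q : Matrix (Fin n) (Fin n) ℝ) (c x : Fin n → ℝ) : gradQ Q c x = Q *ᵥ x + c := rfl

lemma gradQ_eq_add_mulVec_sub (Q : Matrix (Fin n) (Fin n) ℝ) (c x y : Fin n → ℝ) :
    gradQ Q c y = gradQ Q c x + Q *ᵥ (y - x) := by
  simp only [gradQ_eq, mulVec_sub]
  abel

lemma quadF_eq (Q : Matrix (Fin n) (Fin n) ℝ) (c : Fin n → ℝ) (α : ℝ) (x : Fin n → ℝ) :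
    quadF Q c α x = x ⬝ᵥ Q *ᵥ x / 2 + c ⬝ᵥ x + α := by
  rw [quadF, sum_sum_mul_eq_dotProduct_mulVec]
  simp only [dotProduct]
  ring

lemma Matrix.IsSymm.dotProduct_mulVec_comm (hQ : Q.IsSymm) (v w : Fin n → ℝ) :
    v ⬝ᵥ Q *ᵥ w = Q *ᵥ v ⬝ᵥ w := by
  rw [dotProduct_mulVec, ← mulVec_transpose, hQ.eq]

lemma Matrix.IsSymm.dotProduct_mulVec_add (hQ : Q.IsSymm) (v w : Fin n → ℝ) :
    (v + w) ⬝ᵥ Q *ᵥ (v + w) = v ⬝ᵥ Q *ᵥ v + 2 * (Q *ᵥ v ⬝ᵥ w) + w ⬝ᵥ Q *ᵥ w := by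
  simp only [mulVec_add, add_dotProduct, dotProduct_add, hQ.dotProduct_mulVec_comm v w,
    dotProduct_comm w (Q *ᵥ v)]
  ring

lemma quadF_add (hQ : Q.IsSymm) (x d : Fin n → ℝ) :
    quadF Q c α (x + d) = quadF Q c α x + gradQ Q c x ⬝ᵥ d + d ⬝ᵥ Q *ᵥ d / 2 := by
  simp only [quadF_eq, hQ.dotProduct_mulVec_add, gradQ_eq, add_dotProduct, dotProduct_add]
  ring

lemma quadF_add_smul (hQ : Q.IsSymm) (x v : Fin n → ℝ) (t : ℝ) :
    quadF Q c α (x + t • v) =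
      quadF Q c α x + t * (gradQ Q c x ⬝ᵥ v) + t ^ 2 / 2 * (v ⬝ᵥ Q *ᵥ v) := by
  simp only [quadF_add hQ, mulVec_smul, dotProduct_smul, smul_dotProduct, smul_eq_mul]
  ring

end Quadratic

lemma nonneg_of_eventually_mul_add_sq_mul_nonneg {a b : ℝ}
    (h : ∀ᶠ t in 𝓝[>] (0 : ℝ), 0 ≤ t * a + t ^ 2 * b) : 0 ≤ a := by
  have hlim : Tendsto (fun t => a + t * b) (𝓝[>] 0) (𝓝 a) := by
    simpa using ((by fun_prop : Continuous fun t : ℝ => a + t * b).tendsto 0).mono_left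
      nhdsWithin_le_nhds
  refine ge_of_tendsto hlim ?_
  filter_upwards [h, self_mem_nhdsWithin] with t ht (htpos : 0 < t)
  refine (mul_nonneg_iff_of_pos_left htpos).1 ?_
  linarith

lemma eventually_n2_smul_lt (v : Fin n → ℝ) {ε : ℝ} (hε : 0 < ε) :
    ∀ᶠ t in 𝓝 (0 : ℝ), n2 (t • v) < ε := by
  have : Tendsto (fun t : ℝ => n2 (t • v)) (𝓝 0) (𝓝 0) := by
    simpa [Function.comp_def, n2_zero] using
      (continuous_n2.comp (by fun_prop : Continuous fun t : ℝ => t • v)).tendsto 0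
  exact this.eventually_lt_const hε

section LocalMinimizers

variable {f : (Fin n → ℝ) → ℝ} {X : Set (Fin n → ℝ)} {x : Fin n → ℝ}

lemma IsStrictLocMin.isLocMin' (h : IsStrictLocMin f X x) : IsLocMin' f X x := by
  obtain ⟨hx, ε, hε, hmin⟩ := h
  refine ⟨hx, ε, hε, fun y hy hyx => ?_⟩
  rcases eq_or_ne y x with rfl | hne
  · rfl
  · exact (hmin y hy hyx hne).le

lemma IsStrongLocMin.isStrictLocMin (h : IsStrongLocMin f X x) : IsStrictLocMin f X x := by
  obtain ⟨hx, c, hc, ε, hε, hmin⟩ := h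
  refine ⟨hx, ε, hε, fun y hy hyx hne => ?_⟩
  have := n2_pos (sub_ne_zero.2 hne)
  nlinarith [hmin y hy hyx, mul_pos hc (pow_pos this 2)]

lemma IsIsolatedLocMin.isStrictLocMin (h : IsIsolatedLocMin f X x) : IsStrictLocMin f X x := by
  obtain ⟨⟨hx, ε₀, hε₀, hmin⟩, ε₁, hε₁, hiso⟩ := h
  have hε : 0 < min ε₀ ε₁ / 2 := by positivity
  have hε₀' := min_le_left ε₀ ε₁
  have hε₁' := min_le_right ε₀ ε₁
  refine ⟨hx, _, hε, fun y hy hyx hne => lt_of_not_ge fun hle => hne (hiso y ?_ (by linarith))⟩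
  -- `y` ties with the minimum value, so it is a local minimizer as well
  refine ⟨hy, _, hε, fun z hz hzy => hle.trans (hmin z hz ?_)⟩
  linarith [n2_sub_le_n2_sub_add_n2_sub z y x]

lemma IsLocMin'.eventually_le_add_smul (h : IsLocMin' f X x) {v : Fin n → ℝ}
    (hv : ∀ᶠ t in 𝓝[>] (0 : ℝ), x + t • v ∈ X) :
    ∀ᶠ t in 𝓝[>] (0 : ℝ), f x ≤ f (x + t • v) := by
  obtain ⟨-, ε, hε, hmin⟩ := h
  filter_upwards [hv, nhdsWithin_le_nhds (eventually_n2_smul_lt v hε)] with t htX htε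
  exact hmin _ htX (by rwa [add_sub_cancel_left])

lemma IsStrictLocMin.eventually_lt_add_smul (h : IsStrictLocMin f X x) {v : Fin n → ℝ}
    (hv0 : v ≠ 0) (hv : ∀ᶠ t in 𝓝[>] (0 : ℝ), x + t • v ∈ X) :
    ∀ᶠ t in 𝓝[>] (0 : ℝ), f x < f (x + t • v) := by
  obtain ⟨-, ε, hε, hmin⟩ := h
  filter_upwards [hv, nhdsWithin_le_nhds (eventually_n2_smul_lt v hε), self_mem_nhdsWithin]
    with t htX htε (htpos : 0 < t)
  refine hmin _ htX (by rwa [add_sub_cancel_left]) ?_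
  simpa using smul_ne_zero htpos.ne' hv0

end LocalMinimizers

section Stationarity

variable {Q : Matrix (Fin n) (Fin n) ℝ} {c : Fin n → ℝ} {α : ℝ} {X : Set (Fin n → ℝ)}
  {x : Fin n → ℝ}

lemma isStatQ_iff : IsStatQ Q c X x ↔ x ∈ X ∧ ∀ y ∈ X, 0 ≤ gradQ Q c x ⬝ᵥ (y - x) := Iff.rfl

lemma IsLocMin'.isStatQ (hQ : Q.IsSymm) (hX : Convex ℝ X) (h : IsLocMin' (quadF Q c α) X x) :
    IsStatQ Q c X x := by
  refine isStatQ_iff.2 ⟨h.1, fun y hy => ?_⟩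
  have hseg : ∀ᶠ t in 𝓝[>] (0 : ℝ), x + t • (y - x) ∈ X := by
    filter_upwards [Ioo_mem_nhdsGT one_pos] with t ht
    exact hX.add_smul_sub_mem h.1 hy ⟨ht.1.le, ht.2.le⟩
  refine nonneg_of_eventually_mul_add_sq_mul_nonneg (b := (y - x) ⬝ᵥ Q *ᵥ (y - x) / 2) ?_
  filter_upwards [h.eventually_le_add_smul hseg] with t ht
  rw [quadF_add_smul hQ] at ht
  linarith

lemma IsStrictLocMin.dotProduct_mulVec_pos (hQ : Q.IsSymm)
    (h : IsStrictLocMin (quadF Q c α) X x) {v : Fin n → ℝ} (hv0 : v ≠ 0)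
    (hv : ∀ᶠ t in 𝓝[>] (0 : ℝ), x + t • v ∈ X) (hgv : gradQ Q c x ⬝ᵥ v = 0) :
    0 < v ⬝ᵥ Q *ᵥ v := by
  obtain ⟨t, ht, htpos : 0 < t⟩ :=
    ((h.eventually_lt_add_smul hv0 hv).and self_mem_nhdsWithin).exists
  rw [quadF_add_smul hQ, hgv] at ht
  exact pos_of_mul_pos_right (by linarith) (by positivity : (0 : ℝ) ≤ t ^ 2 / 2)

lemma IsStatQ.dotProduct_nonneg_of_mem_tangentCone (h : IsStatQ Q c X x) {v : Fin n → ℝ}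
    (hv : v ∈ TangentCone X x) : 0 ≤ gradQ Q c x ⬝ᵥ v := by
  obtain ⟨xs, τ, hxs, -, hτ, -, hlim⟩ := hv
  refine ge_of_tendsto' (((continuous_const.dotProduct continuous_id).tendsto v).comp hlim)
    fun k => ?_
  simp only [Function.comp_apply, id, dotProduct_smul, smul_eq_mul]
  exact mul_nonneg (inv_nonneg.2 (hτ k).le) ((isStatQ_iff.1 h).2 _ (hxs k))

end Stationarity

lemma mem_tangentCone_of_eventually_add_smul_mem {S : Set (Fin n → ℝ)} {x v : Fin n → ℝ}
    (h : ∀ᶠ t in 𝓝[>] (0 : ℝ), x + t • v ∈ S) : v ∈ TangentCone S x := by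
  obtain ⟨τ, -, hτpos, hτ⟩ := exists_seq_strictAnti_tendsto (0 : ℝ)
  obtain ⟨N, hN⟩ := eventually_atTop.1
    ((tendsto_nhdsWithin_iff.2 ⟨hτ, .of_forall hτpos⟩).eventually h)
  have hτN : Tendsto (fun k => τ (k + N)) atTop (𝓝 0) := (tendsto_add_atTop_iff_nat N).2 hτ
  refine ⟨fun k => x + τ (k + N) • v, fun k => τ (k + N), fun k => hN _ (Nat.le_add_left N k),
    ?_, fun k => hτpos _, hτN, ?_⟩
  · simpa using tendsto_const_nhds.add (hτN.smul_const v)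
  · simp_rw [add_sub_cancel_left, smul_smul, inv_mul_cancel₀ (hτpos _).ne', one_smul]
    exact tendsto_const_nhds

section Polyhedron

def polyhedron (A : Matrix (Fin m) (Fin n) ℝ) (b : Fin m → ℝ) : Set (Fin n → ℝ) :=
  {x | ∀ i, b i ≤ (A *ᵥ x) i}

variable {A : Matrix (Fin m) (Fin n) ℝ} {b : Fin m → ℝ} {x : Fin n → ℝ}

lemma convex_polyhedron (A : Matrix (Fin m) (Fin n) ℝ) (b : Fin m → ℝ) :
    Convex ℝ (polyhedron A b) := by
  intro y hy z hz s t hs ht hst i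
  simp only [mulVec_add, mulVec_smul, Pi.add_apply, Pi.smul_apply, smul_eq_mul]
  have hb : b i = s * b i + t * b i := by rw [← add_mul, hst, one_mul]
  linarith [mul_le_mul_of_nonneg_left (hy i) hs, mul_le_mul_of_nonneg_left (hz i) ht]

lemma eventually_add_smul_mem_polyhedron (hx : x ∈ polyhedron A b) {v : Fin n → ℝ}
    (hv : ∀ i, (A *ᵥ x) i = b i → 0 ≤ (A *ᵥ v) i) :
    ∀ᶠ t in 𝓝[>] (0 : ℝ), x + t • v ∈ polyhedron A b := by
  refine eventually_all.2 fun i => ?_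
  simp only [mulVec_add, mulVec_smul, Pi.add_apply, Pi.smul_apply, smul_eq_mul]
  rcases (hx i).eq_or_lt with hact | hinact
  · filter_upwards [self_mem_nhdsWithin] with t (ht : 0 < t)
    nlinarith [hv i hact.symm]
  · have : Tendsto (fun t : ℝ => (A *ᵥ x) i + t * (A *ᵥ v) i) (𝓝[>] 0) (𝓝 ((A *ᵥ x) i)) := by
      simpa using ((by fun_prop : Continuous fun t : ℝ => (A *ᵥ x) i + t * (A *ᵥ v) i).tendsto
        0).mono_left nhdsWithin_le_nhds
    exact (this.eventually_const_lt hinact).mono fun _ => le_of_lt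

lemma mem_tangentCone_polyhedron_iff (hx : x ∈ polyhedron A b) {v : Fin n → ℝ} :
    v ∈ TangentCone (polyhedron A b) x ↔ ∀ i, (A *ᵥ x) i = b i → 0 ≤ (A *ᵥ v) i := by
  refine ⟨?_, fun hv => mem_tangentCone_of_eventually_add_smul_mem
    (eventually_add_smul_mem_polyhedron hx hv)⟩
  rintro ⟨xs, τ, hxs, -, hτ, -, hlim⟩ i hi
  refine ge_of_tendsto' (((by fun_prop : Continuous fun w => (A *ᵥ w) i).tendsto v).comp hlim)
    fun k => ?_
  simp only [Function.comp_apply, mulVec_smul, mulVec_sub, Pi.smul_apply, Pi.sub_apply,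
    smul_eq_mul, hi]
  exact mul_nonneg (inv_nonneg.2 (hτ k).le) (sub_nonneg.2 (hxs k i))

lemma eventually_tangentCone_polyhedron_subset (hx : x ∈ polyhedron A b) :
    ∀ᶠ y in 𝓝 x, y ∈ polyhedron A b →
      TangentCone (polyhedron A b) x ⊆ TangentCone (polyhedron A b) y := by
  have hinact : ∀ᶠ y in 𝓝 x, ∀ i, b i < (A *ᵥ x) i → b i < (A *ᵥ y) i := by
    refine eventually_all.2 fun i => ?_
    by_cases h : b i < (A *ᵥ x) i
    · exact ((((by fun_prop : Continuous fun w => (A *ᵥ w) i)).tendsto x).eventually_const_lt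
        h).mono fun _ hy _ => hy
    · exact .of_forall fun _ h' => absurd h' h
  filter_upwards [hinact] with y hy hyP u hu
  rw [mem_tangentCone_polyhedron_iff hx] at hu
  rw [mem_tangentCone_polyhedron_iff hyP]
  exact fun i hi => hu i ((hx i).eq_or_lt.resolve_right fun h => (hy i h).ne hi.symm).symm

end Polyhedron

section ConeConditions

variable {Q : Matrix (Fin n) (Fin n) ℝ} {C : Set (Fin n → ℝ)}

def CopositiveOn (Q : Matrix (Fin n) (Fin n) ℝ) (C : Set (Fin n → ℝ)) : Prop :=
  ∀ v ∈ C, 0 ≤ v ⬝ᵥ Q *ᵥ v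

def StrictCopositiveOn (Q : Matrix (Fin n) (Fin n) ℝ) (C : Set (Fin n → ℝ)) : Prop :=
  ∀ v ∈ C, v ≠ 0 → 0 < v ⬝ᵥ Q *ᵥ v

/-- The complementarity problem `C ∋ v ⟂ Q v ∈ C*` has only the trivial solution. -/
def IsR0On (Q : Matrix (Fin n) (Fin n) ℝ) (C : Set (Fin n → ℝ)) : Prop :=
  ∀ v ∈ C, v ⬝ᵥ Q *ᵥ v = 0 → (∀ u ∈ C, 0 ≤ Q *ᵥ v ⬝ᵥ u) → v = 0

lemma StrictCopositiveOn.copositiveOn (h : StrictCopositiveOn Q C) : CopositiveOn Q C := by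
  intro v hv
  rcases eq_or_ne v 0 with rfl | hv0
  · simp
  · exact (h v hv hv0).le

lemma StrictCopositiveOn.isR0On (h : StrictCopositiveOn Q C) : IsR0On Q C :=
  fun v hv hvQv _ => by_contra fun hv0 => (h v hv hv0).ne' hvQv

lemma CopositiveOn.strictCopositiveOn (hQ : Q.IsSymm) (hC : Convex ℝ C)
    (hcop : CopositiveOn Q C) (hR0 : IsR0On Q C) : StrictCopositiveOn Q C := by
  intro v hv hv0
  refine (hcop v hv).lt_of_ne fun hvQv => hv0 (hR0 v hv hvQv.symm fun u hu => ?_)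
  -- copositivity along the segment from `v` to `u`, to first order at `v`
  have hseg : ∀ᶠ t in 𝓝[>] (0 : ℝ),
      0 ≤ t * (2 * (Q *ᵥ v ⬝ᵥ (u - v))) + t ^ 2 * ((u - v) ⬝ᵥ Q *ᵥ (u - v)) := by
    filter_upwards [Ioo_mem_nhdsGT one_pos] with t ht
    have := hcop _ (hC.add_smul_sub_mem hv hu ⟨ht.1.le, ht.2.le⟩)
    simp only [hQ.dotProduct_mulVec_add, mulVec_smul, dotProduct_smul, smul_dotProduct,
      smul_eq_mul, ← hvQv] at this
    linarith
  have := nonneg_of_eventually_mul_add_sq_mul_nonneg hseg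
  rw [dotProduct_sub, dotProduct_comm (Q *ᵥ v) v, ← hvQv] at this
  linarith

end ConeConditions

section CriticalDirections

variable {Q : Matrix (Fin n) (Fin n) ℝ} {c : Fin n → ℝ} {α : ℝ} {X : Set (Fin n → ℝ)}
  {x : Fin n → ℝ}

def criticalCone (Q : Matrix (Fin n) (Fin n) ℝ) (c : Fin n → ℝ) (X : Set (Fin n → ℝ))
    (x : Fin n → ℝ) : Set (Fin n → ℝ) :=
  {v | v ∈ TangentCone X x ∧ gradQ Q c x ⬝ᵥ v = 0}

def IsIsolatedStat (Q : Matrix (Fin n) (Fin n) ℝ) (c : Fin n → ℝ) (X : Set (Fin n → ℝ))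
    (x : Fin n → ℝ) : Prop :=
  ∃ ε > (0 : ℝ), ∀ y, IsStatQ Q c X y → n2 (y - x) < ε → y = x

lemma convex_criticalCone_polyhedron {A : Matrix (Fin m) (Fin n) ℝ} {b : Fin m → ℝ}
    (hx : x ∈ polyhedron A b) : Convex ℝ (criticalCone Q c (polyhedron A b) x) := by
  rintro u ⟨hu, hgu⟩ v ⟨hv, hgv⟩ s t hs ht -
  rw [mem_tangentCone_polyhedron_iff hx] at hu hv
  refine ⟨(mem_tangentCone_polyhedron_iff hx).2 fun i hi => ?_, ?_⟩
  · simp only [mulVec_add, mulVec_smul, Pi.add_apply, Pi.smul_apply, smul_eq_mul]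
    exact add_nonneg (mul_nonneg hs (hu i hi)) (mul_nonneg ht (hv i hi))
  · simp [dotProduct_add, hgu, hgv]

lemma tendsto_n2_sub {l : Filter ℕ} {y : ℕ → Fin n → ℝ} (hy : Tendsto y l (𝓝 x)) :
    Tendsto (fun k => n2 (y k - x)) l (𝓝 0) := by
  simpa [Function.comp_def, n2_zero] using (continuous_n2.tendsto (x - x)).comp (hy.sub_const x)

lemma exists_tendsto_normalized_mem_tangentCone {y : ℕ → Fin n → ℝ} (hyX : ∀ k, y k ∈ X)
    (hy : Tendsto y atTop (𝓝 x)) (hne : ∀ k, y k ≠ x) :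
    ∃ φ : ℕ → ℕ, ∃ w ∈ TangentCone X x, StrictMono φ ∧ n2 w = 1 ∧
      Tendsto (fun k => (n2 (y (φ k) - x))⁻¹ • (y (φ k) - x)) atTop (𝓝 w) := by
  have hr : ∀ k, 0 < n2 (y k - x) := fun k => n2_pos (sub_ne_zero.2 (hne k))
  have hunit : ∀ k, (n2 (y k - x))⁻¹ • (y k - x) ∈ {v | n2 v = 1} := fun k => by
    simp [n2_smul, abs_of_pos (inv_pos.2 (hr k)), inv_mul_cancel₀ (hr k).ne']
  obtain ⟨w, hw, φ, hφ, hlim⟩ := isCompact_n2_eq_one.tendsto_subseq hunit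
  exact ⟨φ, w, ⟨y ∘ φ, fun k => n2 (y (φ k) - x), fun k => hyX _, hy.comp hφ.tendsto_atTop,
    fun k => hr _, (tendsto_n2_sub hy).comp hφ.tendsto_atTop, hlim⟩, hφ, hw, hlim⟩

lemma IsStatQ.exists_mem_criticalCone_of_tendsto (hx : IsStatQ Q c X x) {y : ℕ → Fin n → ℝ}
    (hyX : ∀ k, y k ∈ X) (hy : Tendsto y atTop (𝓝 x)) (hne : ∀ k, y k ≠ x) {κ : ℝ} (hκ : 0 < κ)
    {e : ℕ → ℝ} (he : Tendsto e atTop (𝓝 0))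
    (hdesc : ∀ k, gradQ Q c x ⬝ᵥ (y k - x) + κ * ((y k - x) ⬝ᵥ Q *ᵥ (y k - x)) ≤
      e k * n2 (y k - x) ^ 2) :
    ∃ φ : ℕ → ℕ, ∃ w ∈ criticalCone Q c X x, StrictMono φ ∧ w ≠ 0 ∧ w ⬝ᵥ Q *ᵥ w ≤ 0 ∧
      Tendsto (fun k => (n2 (y (φ k) - x))⁻¹ • (y (φ k) - x)) atTop (𝓝 w) := by
  obtain ⟨φ, w, hwT, hφ, hw1, hlim⟩ := exists_tendsto_normalized_mem_tangentCone hyX hy hne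
  set v := fun k => (n2 (y (φ k) - x))⁻¹ • (y (φ k) - x)
  have hbounds : ∀ k, κ * (v k ⬝ᵥ Q *ᵥ v k) ≤ e (φ k) ∧
      gradQ Q c x ⬝ᵥ v k ≤ n2 (y (φ k) - x) * (e (φ k) - κ * (v k ⬝ᵥ Q *ᵥ v k)) := by
    intro k
    have hG := (isStatQ_iff.1 hx).2 _ (hyX (φ k))
    have hr := n2_pos (sub_ne_zero.2 (hne (φ k)))
    have h := hdesc (φ k)
    simp only [v, mulVec_smul, dotProduct_smul, smul_dotProduct, smul_eq_mul]
    generalize n2 (y (φ k) - x) = r at hr h ⊢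
    generalize gradQ Q c x ⬝ᵥ (y (φ k) - x) = G at hG h ⊢
    generalize (y (φ k) - x) ⬝ᵥ Q *ᵥ (y (φ k) - x) = D at h ⊢
    constructor
    · rw [show κ * (r⁻¹ * (r⁻¹ * D)) = κ * D / r ^ 2 by field_simp, div_le_iff₀ (by positivity)]
      linarith
    · rw [show r * (e (φ k) - κ * (r⁻¹ * (r⁻¹ * D))) = (e (φ k) * r ^ 2 - κ * D) / r by
        field_simp, ← div_eq_inv_mul]
      exact div_le_div_of_nonneg_right (by linarith) hr.le
  have hQv : Tendsto (fun k => v k ⬝ᵥ Q *ᵥ v k) atTop (𝓝 (w ⬝ᵥ Q *ᵥ w)) :=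
    ((by fun_prop : Continuous fun u : Fin n → ℝ => u ⬝ᵥ Q *ᵥ u).tendsto w).comp hlim
  have heφ := he.comp hφ.tendsto_atTop
  have hwQ : κ * (w ⬝ᵥ Q *ᵥ w) ≤ 0 :=
    le_of_tendsto_of_tendsto' (hQv.const_mul κ) heφ fun k => (hbounds k).1
  have hgw : gradQ Q c x ⬝ᵥ w ≤ 0 := by
    refine le_of_tendsto_of_tendsto'
      (((by fun_prop : Continuous fun u => gradQ Q c x ⬝ᵥ u).tendsto w).comp hlim) ?_
      fun k => (hbounds k).2
    simpa using ((tendsto_n2_sub hy).comp hφ.tendsto_atTop).mul (heφ.sub (hQv.const_mul κ))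
  refine ⟨φ, w, ⟨hwT, le_antisymm hgw (hx.dotProduct_nonneg_of_mem_tangentCone hwT)⟩, hφ,
    fun h => by simp [h, n2_zero] at hw1, nonpos_of_mul_nonpos_right hwQ hκ, hlim⟩

end CriticalDirections

section SecondOrder

variable {Q : Matrix (Fin n) (Fin n) ℝ} {c : Fin n → ℝ} {α : ℝ} {x : Fin n → ℝ}

lemma IsStatQ.isStrongLocMin {X : Set (Fin n → ℝ)} (hQ : Q.IsSymm) (hx : IsStatQ Q c X x)
    (hpos : StrictCopositiveOn Q (criticalCone Q c X x)) : IsStrongLocMin (quadF Q c α) X x := by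
  refine ⟨hx.1, ?_⟩
  by_contra! h
  choose y hyX hyx hylt using fun k : ℕ =>
    h (1 / ((k : ℝ) + 1)) (by positivity) (1 / ((k : ℝ) + 1)) (by positivity)
  have hne : ∀ k, y k ≠ x := fun k hk => by simpa [hk, n2_zero] using hylt k
  have hdesc : ∀ k, gradQ Q c x ⬝ᵥ (y k - x) + 1 / 2 * ((y k - x) ⬝ᵥ Q *ᵥ (y k - x)) ≤
      1 / ((k : ℝ) + 1) * n2 (y k - x) ^ 2 := fun k => by
    have h := hylt k
    rw [← add_sub_cancel x (y k), quadF_add hQ, add_sub_cancel] at h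
    linarith
  obtain ⟨-, w, hwC, -, hw0, hwQ, -⟩ := hx.exists_mem_criticalCone_of_tendsto hyX
    (tendsto_of_n2_sub_lt hyx) hne one_half_pos tendsto_one_div_add_atTop_nhds_zero_nat hdesc
  exact (hpos w hwC hw0).not_ge hwQ

lemma IsStatQ.isIsolatedStat {A : Matrix (Fin m) (Fin n) ℝ} {b : Fin m → ℝ}
    (hx : IsStatQ Q c (polyhedron A b) x)
    (hcop : CopositiveOn Q (criticalCone Q c (polyhedron A b) x))
    (hR0 : IsR0On Q (criticalCone Q c (polyhedron A b) x)) :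
    IsIsolatedStat Q c (polyhedron A b) x := by
  unfold IsIsolatedStat
  by_contra! h
  choose y hy hyx hne using fun k : ℕ => h (1 / ((k : ℝ) + 1)) (by positivity)
  have hlim := tendsto_of_n2_sub_lt hyx
  -- stationarity of `y k` tested at `x`, with `∇q(y k) = ∇q(x) + Q (y k - x)`
  have hdesc : ∀ k, gradQ Q c x ⬝ᵥ (y k - x) + 1 * ((y k - x) ⬝ᵥ Q *ᵥ (y k - x)) ≤
      0 * n2 (y k - x) ^ 2 := fun k => by
    have h := (isStatQ_iff.1 (hy k)).2 x hx.1
    rw [gradQ_eq_add_mulVec_sub Q c x, ← neg_sub (y k) x, dotProduct_neg, add_dotProduct,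
      dotProduct_comm (Q *ᵥ _)] at h
    linarith
  obtain ⟨φ, w, hwC, hφ, hw0, hwQ, hwlim⟩ := hx.exists_mem_criticalCone_of_tendsto
    (fun k => (hy k).1) hlim hne one_pos tendsto_const_nhds hdesc
  refine hw0 (hR0 w hwC (le_antisymm hwQ (hcop w hwC)) fun u hu => ?_)
  -- `u` stays tangent at `y (φ k)`, where stationarity gives `0 ≤ ∇q(y) ⬝ u = Q (y - x) ⬝ u`
  have hev : ∀ᶠ k in atTop, 0 ≤ Q *ᵥ ((n2 (y (φ k) - x))⁻¹ • (y (φ k) - x)) ⬝ᵥ u := by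
    filter_upwards [(hlim.comp hφ.tendsto_atTop).eventually
      (eventually_tangentCone_polyhedron_subset hx.1)] with k hk
    have h := (hy (φ k)).dotProduct_nonneg_of_mem_tangentCone (hk (hy (φ k)).1 hu.1)
    rw [gradQ_eq_add_mulVec_sub Q c x, add_dotProduct, hu.2, zero_add] at h
    rw [mulVec_smul, smul_dotProduct, smul_eq_mul]
    exact mul_nonneg (inv_nonneg.2 (n2_nonneg _)) h
  exact ge_of_tendsto (((by fun_prop : Continuous fun v => Q *ᵥ v ⬝ᵥ u).tendsto w).comp hwlim) hev

end SecondOrder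

theorem tfae_isStrongLocMin_polyhedron {Q : Matrix (Fin n) (Fin n) ℝ} (hQ : Q.IsSymm)
    (c : Fin n → ℝ) (α : ℝ) (A : Matrix (Fin m) (Fin n) ℝ) (b : Fin m → ℝ) (x : Fin n → ℝ) :
    List.TFAE [
      IsStatQ Q c (polyhedron A b) x ∧ StrictCopositiveOn Q (criticalCone Q c (polyhedron A b) x),
      IsStatQ Q c (polyhedron A b) x ∧ CopositiveOn Q (criticalCone Q c (polyhedron A b) x) ∧
        IsR0On Q (criticalCone Q c (polyhedron A b) x),
      IsLocMin' (quadF Q c α) (polyhedron A b) x ∧ IsStatQ Q c (polyhedron A b) x ∧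
        IsIsolatedStat Q c (polyhedron A b) x,
      IsIsolatedLocMin (quadF Q c α) (polyhedron A b) x,
      IsStrictLocMin (quadF Q c α) (polyhedron A b) x,
      IsStrongLocMin (quadF Q c α) (polyhedron A b) x] := by
  tfae_have 1 → 2 := fun ⟨hx, hpos⟩ => ⟨hx, hpos.copositiveOn, hpos.isR0On⟩
  tfae_have 2 → 1 := fun ⟨hx, hcop, hR0⟩ =>
    ⟨hx, hcop.strictCopositiveOn hQ (convex_criticalCone_polyhedron hx.1) hR0⟩
  tfae_have 1 → 6 := fun ⟨hx, hpos⟩ => hx.isStrongLocMin hQ hpos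
  tfae_have 6 → 5 := IsStrongLocMin.isStrictLocMin
  tfae_have 5 → 1 := fun h =>
    ⟨h.isLocMin'.isStatQ hQ (convex_polyhedron A b), fun v ⟨hvT, hgv⟩ hv0 =>
      h.dotProduct_mulVec_pos hQ hv0 (eventually_add_smul_mem_polyhedron h.1
        ((mem_tangentCone_polyhedron_iff h.1).1 hvT)) hgv⟩
  tfae_have 2 → 3 := fun ⟨hx, hcop, hR0⟩ =>
    ⟨(hx.isStrongLocMin hQ (hcop.strictCopositiveOn hQ (convex_criticalCone_polyhedron hx.1)
      hR0)).isStrictLocMin.isLocMin', hx, hx.isIsolatedStat hcop hR0⟩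
  tfae_have 3 → 4 := fun ⟨hmin, _, ε, hε, hiso⟩ =>
    ⟨hmin, ε, hε, fun y hy => hiso y (hy.isStatQ hQ (convex_polyhedron A b))⟩
  tfae_have 4 → 5 := IsIsolatedLocMin.isStrictLocMin
  tfae_finish

end Development

theorem stmt3_general {n m : ℕ} (Q : Matrix (Fin n) (Fin n) ℝ) (hQ : ∀ i j, Q i j = Q j i)
    (c : Fin n → ℝ) (α : ℝ) (A : Matrix (Fin m) (Fin n) ℝ) (b : Fin m → ℝ)
    (P : Set (Fin n → ℝ)) (hP : P = {x | ∀ i, b i ≤ ∑ j, A i j * x j})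
    (xbar : Fin n → ℝ)
    -- the critical cone C(x̄;q;P) = T(x̄;P) ∩ ∇q(x̄)^⊥
    (C : Set (Fin n → ℝ))
    (hC : C = {v | v ∈ TangentCone P xbar ∧ (∑ i, gradQ Q c xbar i * v i) = 0}) :
    -- (a1): stationary and Q strictly copositive on C
    ((IsStatQ Q c P xbar ∧ ∀ v ∈ C, v ≠ 0 → 0 < ∑ i, ∑ j, Q i j * v i * v j)
      ↔
    -- (a2): stationary, Q copositive on C, and the R₀-type implication holds
     (IsStatQ Q c P xbar ∧ (∀ v ∈ C, 0 ≤ ∑ i, ∑ j, Q i j * v i * v j) ∧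
       (∀ v ∈ C, (∑ i, v i * (∑ j, Q i j * v j)) = 0 →
         (∀ u ∈ C, 0 ≤ ∑ i, (∑ j, Q i j * v j) * u i) → v = 0))) ∧
    -- (a2) ↔ (a3): local minimizer and isolated stationary point
    ((IsStatQ Q c P xbar ∧ (∀ v ∈ C, 0 ≤ ∑ i, ∑ j, Q i j * v i * v j) ∧
       (∀ v ∈ C, (∑ i, v i * (∑ j, Q i j * v j)) = 0 →
         (∀ u ∈ C, 0 ≤ ∑ i, (∑ j, Q i j * v j) * u i) → v = 0))
      ↔
     (IsLocMin' (quadF Q c α) P xbar ∧ IsStatQ Q c P xbar ∧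
       ∃ ε > (0:ℝ), ∀ y, IsStatQ Q c P y → n2 (y - xbar) < ε → y = xbar)) ∧
    -- (a3) ↔ (a4): isolated local minimizer
    ((IsLocMin' (quadF Q c α) P xbar ∧ IsStatQ Q c P xbar ∧
       ∃ ε > (0:ℝ), ∀ y, IsStatQ Q c P y → n2 (y - xbar) < ε → y = xbar)
      ↔ IsIsolatedLocMin (quadF Q c α) P xbar) ∧
    -- (a4) ↔ (a5): strict local minimizer
    (IsIsolatedLocMin (quadF Q c α) P xbar ↔ IsStrictLocMin (quadF Q c α) P xbar) ∧
    -- (a5) ↔ (a6): strong local minimizer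
    (IsStrictLocMin (quadF Q c α) P xbar ↔ IsStrongLocMin (quadF Q c α) P xbar) := by
  subst hP hC
  simp only [sum_sum_mul_eq_dotProduct_mulVec]
  have h := tfae_isStrongLocMin_polyhedron (IsSymm.ext fun i j => hQ j i) c α A b xbar
  exact ⟨h.out 0 1, h.out 1 2, h.out 2 3, h.out 3 4, h.out 4 5⟩

/-- Equivalent characterizations of strong/strict/isolated local minimizers
of a quadratic program over a polyhedron `P = {x : Ax ≥ b}`. -/
theorem stmt3 {n m : ℕ} (Q : Matrix (Fin n) (Fin n) ℝ) (hQ : ∀ i j, Q i j = Q j i)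
    (c : Fin n → ℝ) (α : ℝ) (A : Matrix (Fin m) (Fin n) ℝ) (b : Fin m → ℝ)
    (P : Set (Fin n → ℝ)) (hP : P = {x | ∀ i, b i ≤ ∑ j, A i j * x j})
    (xbar : Fin n → ℝ) (hxbar : xbar ∈ P)
    -- the critical cone C(x̄;q;P) = T(x̄;P) ∩ ∇q(x̄)^⊥
    (C : Set (Fin n → ℝ))
    (hC : C = {v | v ∈ TangentCone P xbar ∧ (∑ i, gradQ Q c xbar i * v i) = 0}) :
    -- (a1): stationary and Q strictly copositive on C
    ((IsStatQ Q c P xbar ∧ ∀ v ∈ C, v ≠ 0 → 0 < ∑ i, ∑ j, Q i j * v i * v j)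
      ↔
    -- (a2): stationary, Q copositive on C, and the R₀-type implication holds
     (IsStatQ Q c P xbar ∧ (∀ v ∈ C, 0 ≤ ∑ i, ∑ j, Q i j * v i * v j) ∧
       (∀ v ∈ C, (∑ i, v i * (∑ j, Q i j * v j)) = 0 →
         (∀ u ∈ C, 0 ≤ ∑ i, (∑ j, Q i j * v j) * u i) → v = 0))) ∧
    -- (a2) ↔ (a3): local minimizer and isolated stationary point
    ((IsStatQ Q c P xbar ∧ (∀ v ∈ C, 0 ≤ ∑ i, ∑ j, Q i j * v i * v j) ∧
       (∀ v ∈ C, (∑ i, v i * (∑ j, Q i j * v j)) = 0 →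
         (∀ u ∈ C, 0 ≤ ∑ i, (∑ j, Q i j * v j) * u i) → v = 0))
      ↔
     (IsLocMin' (quadF Q c α) P xbar ∧ IsStatQ Q c P xbar ∧
       ∃ ε > (0:ℝ), ∀ y, IsStatQ Q c P y → n2 (y - xbar) < ε → y = xbar)) ∧
    -- (a3) ↔ (a4): isolated local minimizer
    ((IsLocMin' (quadF Q c α) P xbar ∧ IsStatQ Q c P xbar ∧
       ∃ ε > (0:ℝ), ∀ y, IsStatQ Q c P y → n2 (y - xbar) < ε → y = xbar)
      ↔ IsIsolatedLocMin (quadF Q c α) P xbar) ∧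
    -- (a4) ↔ (a5): strict local minimizer
    (IsIsolatedLocMin (quadF Q c α) P xbar ↔ IsStrictLocMin (quadF Q c α) P xbar) ∧
    -- (a5) ↔ (a6): strong local minimizer
    (IsStrictLocMin (quadF Q c α) P xbar ↔ IsStrongLocMin (quadF Q c α) P xbar) :=
  stmt3_general Q hQ c α A b P hP xbar C hC
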